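/- For every field K there is no configuration 𝓛 of 8 mutually distinct lines in the projective plane over K with t_2(𝓛) = 1, t_3(𝓛) = 5, t_4(𝓛) = 2 and t_k(𝓛) = 0 for all k ≥ 5. -/

import Mathlib

/-- Points of the projective plane over `K`. -/
abbrev PPoint (K : Type*) [Field K] := Projectivization K (Fin 3 → K)

/-- Lines of the projective plane over `K`: points of the projectivization of the dual space. -/
abbrev PLine (K : Type*) [Field K] := Projectivization K (Module.Dual K (Fin 3 → K))

/-- A point lies on a line iff a representative functional of the line vanishes on a
representative vector of the point. -/
def OnLine {K : Type*} [Field K] (P : PPoint K) (L : PLine K) : Prop :=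
  L.rep P.rep = 0

/-- The multiplicity of a point `P` with respect to a configuration `𝓛`:
the number of lines of `𝓛` passing through `P`. -/
noncomputable def mult {K : Type*} [Field K] (𝓛 : Finset (PLine K)) (P : PPoint K) : ℕ :=
  {L : PLine K | L ∈ 𝓛 ∧ OnLine P L}.ncard

/-- The singular points of a configuration: points lying on at least two of its lines. -/
def SingPts {K : Type*} [Field K] (𝓛 : Finset (PLine K)) : Set (PPoint K) :=
  {P | 2 ≤ mult 𝓛 P}

/-- `tk 𝓛 k` is the number of points of multiplicity exactly `k` (used for `k ≥ 2`). -/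
noncomputable def tk {K : Type*} [Field K] (𝓛 : Finset (PLine K)) (k : ℕ) : ℕ :=
  {P : PPoint K | mult 𝓛 P = k}.ncard

/-- The linear Harbourne constant of a configuration `𝓛` of lines:
`(d² − Σ_P m_𝓛(P)²)/s` where the sum runs over the `s` singular points of `𝓛`. -/
noncomputable def HL {K : Type*} [Field K] (𝓛 : Finset (PLine K)) : ℚ :=
  ((𝓛.card : ℚ) ^ 2 - ∑ᶠ P ∈ SingPts 𝓛, (mult 𝓛 P : ℚ) ^ 2) / ((SingPts 𝓛).ncard : ℚ)

/-! Two lines through the quadruple points `A` and `B` other than the line `AB` meet away from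
`A` and `B`, and distinct such pairs meet in distinct points. With at least three such lines
through each of `A` and `B`, this produces nine singular points besides `A` and `B`, whereas
the configuration has only `t₂ + t₃ + t₄ = 8` singular points in total. -/

open Module Projectivization

section Incidence

variable {K : Type*} [Field K]

lemma onLine_iff_mem_ker {P : PPoint K} {L : PLine K} :
    OnLine P L ↔ P ∈ (LinearMap.ker L.rep).projectivization := by
  rw [Submodule.mem_projectivization_iff_submodule_le, submodule_eq,
    Submodule.span_singleton_le_iff_mem, LinearMap.mem_ker, OnLine]

lemma finrank_ker_rep (L : PLine K) : finrank K (LinearMap.ker L.rep) = 2 := by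
  have := Module.Dual.finrank_ker_add_one_of_ne_zero L.rep_nonzero
  simp only [finrank_fin_fun] at this
  omega

lemma PLine.eq_of_ker_rep_eq {L₁ L₂ : PLine K}
    (h : LinearMap.ker L₁.rep = LinearMap.ker L₂.rep) : L₁ = L₂ := by
  have hmem : L₂.rep ∈ Submodule.span K (Set.range fun _ : Unit => L₁.rep) :=
    mem_span_of_iInf_ker_le_ker (by simp [h])
  rw [Set.range_const, Submodule.mem_span_singleton] at hmem
  obtain ⟨c, hc⟩ := hmem
  rw [← mk_rep L₁, ← mk_rep L₂, eq_comm, mk_eq_mk_iff']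
  exact ⟨c, hc⟩

lemma exists_onLine_onLine (L₁ L₂ : PLine K) : ∃ P : PPoint K, OnLine P L₁ ∧ OnLine P L₂ := by
  have : LinearMap.ker (L₁.rep.prod L₂.rep) ≠ ⊥ := LinearMap.ker_ne_bot_of_finrank_lt (by simp)
  obtain ⟨v, hv, hv0⟩ := Submodule.exists_mem_ne_zero_of_ne_bot this
  rw [LinearMap.ker_prod, Submodule.mem_inf] at hv
  exact ⟨mk K v hv0, onLine_iff_mem_ker.2 hv.1, onLine_iff_mem_ker.2 hv.2⟩

lemma eq_of_onLine_of_ne {P Q : PPoint K} {L₁ L₂ : PLine K} (hPQ : P ≠ Q)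
    (hP₁ : OnLine P L₁) (hQ₁ : OnLine Q L₁) (hP₂ : OnLine P L₂) (hQ₂ : OnLine Q L₂) :
    L₁ = L₂ := by
  simp only [onLine_iff_mem_ker] at *
  exact PLine.eq_of_ker_rep_eq <| line_unique hPQ _ _ (finrank_ker_rep L₁) (finrank_ker_rep L₂)
    hP₁ hQ₁ hP₂ hQ₂

noncomputable def meet (L₁ L₂ : PLine K) : PPoint K :=
  (exists_onLine_onLine L₁ L₂).choose

lemma onLine_meet_left (L₁ L₂ : PLine K) : OnLine (meet L₁ L₂) L₁ :=
  (exists_onLine_onLine L₁ L₂).choose_spec.1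

lemma onLine_meet_right (L₁ L₂ : PLine K) : OnLine (meet L₁ L₂) L₂ :=
  (exists_onLine_onLine L₁ L₂).choose_spec.2

end Incidence

section Configuration

variable {K : Type*} [Field K] (𝓛 : Finset (PLine K))

open Classical in
noncomputable def linesThrough (P : PPoint K) : Finset (PLine K) :=
  𝓛.filter (OnLine P)

@[simp]
lemma mem_linesThrough {P : PPoint K} {L : PLine K} :
    L ∈ linesThrough 𝓛 P ↔ L ∈ 𝓛 ∧ OnLine P L := by
  simp [linesThrough]

lemma mult_eq_card_linesThrough (P : PPoint K) : mult 𝓛 P = (linesThrough 𝓛 P).card := by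
  rw [mult, ← Set.ncard_coe_finset]
  congr 1
  ext L
  simp

lemma mult_le_card (P : PPoint K) : mult 𝓛 P ≤ 𝓛.card := by
  rw [mult_eq_card_linesThrough]
  exact Finset.card_le_card fun L hL => ((mem_linesThrough 𝓛).1 hL).1

lemma mem_singPts_iff {P : PPoint K} :
    P ∈ SingPts 𝓛 ↔ ∃ L₁ ∈ 𝓛, ∃ L₂ ∈ 𝓛, L₁ ≠ L₂ ∧ OnLine P L₁ ∧ OnLine P L₂ := by
  rw [SingPts, Set.mem_ofPred_eq, mult_eq_card_linesThrough, Nat.succ_le_iff,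
    Finset.one_lt_card]
  simp only [mem_linesThrough]
  aesop

lemma finite_singPts : (SingPts 𝓛).Finite := by
  have hsub : SingPts 𝓛 ⊆ ⋃ p ∈ 𝓛.offDiag, {P | OnLine P p.1 ∧ OnLine P p.2} := by
    intro P hP
    obtain ⟨L₁, h₁, L₂, h₂, hne, hP₁, hP₂⟩ := (mem_singPts_iff 𝓛).1 hP
    exact Set.mem_biUnion (x := (L₁, L₂)) (Finset.mem_offDiag.2 ⟨h₁, h₂, hne⟩) ⟨hP₁, hP₂⟩
  refine (Set.Finite.biUnion 𝓛.offDiag.finite_toSet fun p hp => ?_).subset hsub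
  refine Set.Subsingleton.finite fun P hP Q hQ => ?_
  by_contra hPQ
  exact (Finset.mem_offDiag.1 hp).2.2 (eq_of_onLine_of_ne hPQ hP.1 hQ.1 hP.2 hQ.2)

theorem ncard_singPts_eq_sum_tk :
    (SingPts 𝓛).ncard = ∑ k ∈ Finset.Icc 2 𝓛.card, tk 𝓛 k := by
  classical
  set S := (finite_singPts 𝓛).toFinset
  have hmaps : (S : Set (PPoint K)).MapsTo (mult 𝓛) (Finset.Icc 2 𝓛.card) := fun P hP =>
    Finset.mem_Icc.2 ⟨by simpa [S, SingPts] using hP, mult_le_card 𝓛 P⟩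
  rw [Set.ncard_eq_toFinset_card _ (finite_singPts 𝓛), Finset.card_eq_sum_card_fiberwise hmaps]
  refine Finset.sum_congr rfl fun k hk => ?_
  rw [tk, ← Set.ncard_coe_finset]
  congr 1
  ext P
  simp only [Finset.coe_filter, Set.Finite.mem_toFinset, S, SingPts, Set.mem_ofPred_eq]
  have h2k := (Finset.mem_Icc.1 hk).1
  exact ⟨And.right, fun h => ⟨h ▸ h2k, h⟩⟩

theorem mul_le_ncard_singPts_sdiff {A B : PPoint K} (hAB : A ≠ B) :
    (mult 𝓛 A - 1) * (mult 𝓛 B - 1) ≤ (SingPts 𝓛 \ {A, B}).ncard := by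
  classical
  set LA := linesThrough 𝓛 A
  set LB := linesThrough 𝓛 B
  have hcommon : (LB ∩ LA).card ≤ 1 := Finset.card_le_one.2 fun L₁ h₁ L₂ h₂ => by
    simp only [Finset.mem_inter, mem_linesThrough, LA, LB] at h₁ h₂
    exact eq_of_onLine_of_ne hAB h₁.2.2 h₁.1.2 h₂.2.2 h₂.1.2
  have hA : mult 𝓛 A - 1 ≤ (LA \ LB).card := by
    have : mult 𝓛 A = LA.card := mult_eq_card_linesThrough 𝓛 A
    rw [Finset.card_sdiff]
    omega
  have hB : mult 𝓛 B - 1 ≤ (LB \ LA).card := by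
    have : mult 𝓛 B = LB.card := mult_eq_card_linesThrough 𝓛 B
    rw [Finset.card_sdiff, Finset.inter_comm LA LB]
    omega
  set D := (LA \ LB) ×ˢ (LB \ LA)
  have hD : ∀ p ∈ (D : Set (PLine K × PLine K)), p.1 ∈ 𝓛 ∧ OnLine A p.1 ∧ ¬ OnLine B p.1 ∧
      p.2 ∈ 𝓛 ∧ OnLine B p.2 ∧ ¬ OnLine A p.2 := fun p hp => by
    simp only [D, Finset.coe_product, Set.mem_prod, Finset.mem_coe, Finset.mem_sdiff,
      mem_linesThrough, LA, LB] at hp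
    tauto
  have hmeet_ne : ∀ p ∈ (D : Set (PLine K × PLine K)), meet p.1 p.2 ≠ A ∧ meet p.1 p.2 ≠ B := by
    intro p hp
    obtain ⟨-, -, hB₁, -, -, hA₂⟩ := hD p hp
    exact ⟨fun h => hA₂ (h ▸ onLine_meet_right _ _), fun h => hB₁ (h ▸ onLine_meet_left _ _)⟩
  have hmaps : ∀ p ∈ (D : Set (PLine K × PLine K)), meet p.1 p.2 ∈ SingPts 𝓛 \ {A, B} := by
    intro p hp
    obtain ⟨h₁, hA₁, -, h₂, -, hA₂⟩ := hD p hp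
    refine ⟨(mem_singPts_iff 𝓛).2 ⟨p.1, h₁, p.2, h₂, fun h => hA₂ (h ▸ hA₁),
      onLine_meet_left _ _, onLine_meet_right _ _⟩, ?_⟩
    simpa [not_or] using hmeet_ne p hp
  have hinj : Set.InjOn (fun p : PLine K × PLine K => meet p.1 p.2) D := by
    intro p hp q hq (hpq : meet p.1 p.2 = meet q.1 q.2)
    obtain ⟨-, hA₁, -, -, hB₂, -⟩ := hD p hp
    obtain ⟨-, hA₁', -, -, hB₂', -⟩ := hD q hq
    obtain ⟨hXA, hXB⟩ := hmeet_ne p hp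
    exact Prod.ext
      (eq_of_onLine_of_ne hXA (onLine_meet_left _ _) hA₁ (hpq ▸ onLine_meet_left _ _) hA₁')
      (eq_of_onLine_of_ne hXB (onLine_meet_right _ _) hB₂ (hpq ▸ onLine_meet_right _ _) hB₂')
  calc (mult 𝓛 A - 1) * (mult 𝓛 B - 1) ≤ D.card := by
        rw [Finset.card_product]
        exact Nat.mul_le_mul hA hB
    _ = (D : Set (PLine K × PLine K)).ncard := (Set.ncard_coe_finset _).symm
    _ ≤ _ := Set.ncard_le_ncard_of_injOn _ hmaps hinj (finite_singPts 𝓛).sdiff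

end Configuration

/-- Over any field there is no configuration of `8` lines with `t₂ = 1`, `t₃ = 5`,
`t₄ = 2` and `t_k = 0` for all `k ≥ 5`. -/
theorem no_eight_lines_config (K : Type*) [Field K] :
    ¬ ∃ 𝓛 : Finset (PLine K), 𝓛.card = 8 ∧ tk 𝓛 2 = 1 ∧ tk 𝓛 3 = 5 ∧ tk 𝓛 4 = 2 ∧
      ∀ k, 5 ≤ k → tk 𝓛 k = 0 := by
  rintro ⟨𝓛, hcard, h2, h3, h4, h5⟩
  obtain ⟨A, B, hAB, hquad⟩ := Set.ncard_eq_two.mp h4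
  have hmult_four : ∀ P ∈ ({A, B} : Set (PPoint K)), mult 𝓛 P = 4 := fun P hP => by
    rwa [← hquad] at hP
  have hA := hmult_four A (by simp)
  have hB := hmult_four B (by simp)
  have hsing : (SingPts 𝓛).ncard = 8 := by
    rw [ncard_singPts_eq_sum_tk, hcard]
    simp [Finset.sum_Icc_succ_top, h2, h3, h4, h5]
  have hAB_sing : {A, B} ⊆ SingPts 𝓛 := by
    simp [Set.insert_subset_iff, SingPts, hA, hB]
  have := mul_le_ncard_singPts_sdiff 𝓛 hAB
  rw [Set.ncard_sdiff hAB_sing, hsing, Set.ncard_pair hAB, hA, hB] at this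
  omega
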